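/- arXiv:1312.2161 — 5 statements merged into one kernel-verified Lean document; each statement's English description precedes it below -/
import Mathlib

section
/- Suppose ι is a C^{1,γ}-embedding with constant C. Fix x ∈ ℝⁿ and a direction e ∈ ℝⁿ with ‖e‖ ≤ 1, and let Λ ∈ X* be the functional Λ(f) = (fderiv ℝ f̂ x) e. Then for every real number h ≠ 0, ‖(δ(x + h·e) − δ(x))/h − Λ‖_{X*} ≤ C|h|^γ. Consequently the directional derivative of δ at x in the direction e exists in X* and equals Λ. -/
/-!
A `γ`-Hölder bound on `fderiv f̂` with constant `C‖f‖` turns the mean value inequality along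
the segment from `x` to `x + h • e` into the Taylor remainder bound
`|f̂ (x + h • e) - f̂ x - h • f̂'(x) e| ≤ C‖f‖ |h|^(1+γ)`. After division by `h` this is uniform
over the unit ball of `X`, hence an operator-norm bound on the difference quotient of `δ`, and
it tends to `0` with `h`.
-/

/-- `ι : X →ₗ[ℝ] ((Fin n → ℝ) → ℝ)` is a `C^{m,γ}`-embedding with constant `C`:
for every `f : X` the function `f̂ = ι f` is `m`-times continuously differentiable,
all iterated derivatives up to order `m` are bounded by `C‖f‖`, and the `m`-th
iterated derivative is `γ`-Hölder with constant `C‖f‖`. -/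
def IsCmGammaEmbedding {X : Type*} [NormedAddCommGroup X] [NormedSpace ℝ X]
    (n : ℕ) (ι : X →ₗ[ℝ] ((Fin n → ℝ) → ℝ)) (m : ℕ) (γ C : ℝ) : Prop :=
  ∀ f : X,
    ContDiff ℝ m (ι f) ∧
    (∀ i : ℕ, i ≤ m → ∀ x : Fin n → ℝ, ‖iteratedFDeriv ℝ i (ι f) x‖ ≤ C * ‖f‖) ∧
    ∀ x y : Fin n → ℝ,
      ‖iteratedFDeriv ℝ m (ι f) x - iteratedFDeriv ℝ m (ι f) y‖ ≤ C * ‖f‖ * ‖x - y‖ ^ γ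

open Filter Topology

section HolderDerivative

variable {E F : Type*} [NormedAddCommGroup E] [NormedSpace ℝ E]
  [NormedAddCommGroup F] [NormedSpace ℝ F]

theorem norm_fderiv_sub_fderiv_eq_norm_iteratedFDeriv_one_sub (f : E → F) (z w : E) :
    ‖fderiv ℝ f z - fderiv ℝ f w‖ = ‖iteratedFDeriv ℝ 1 f z - iteratedFDeriv ℝ 1 f w‖ := by
  have hcurry : ∀ y,
      fderiv ℝ f y = continuousMultilinearCurryFin1 ℝ E F (iteratedFDeriv ℝ 1 f y) :=
    fun y => by ext v; simp
  rw [hcurry, hcurry, ← map_sub, LinearIsometryEquiv.norm_map]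

theorem norm_image_sub_sub_fderiv_le_of_holder {f : E → F} (hf : Differentiable ℝ f)
    {K γ : ℝ} (hK : 0 ≤ K) (hγ : 0 ≤ γ) {x : E}
    (hhol : ∀ z, ‖fderiv ℝ f z - fderiv ℝ f x‖ ≤ K * ‖z - x‖ ^ γ) (y : E) :
    ‖f y - f x - fderiv ℝ f x (y - x)‖ ≤ K * ‖y - x‖ ^ γ * ‖y - x‖ := by
  refine (convex_segment x y).norm_image_sub_le_of_norm_fderiv_le' (fun z _ => hf z)
    (fun z hz => (hhol z).trans ?_) (left_mem_segment ℝ x y) (right_mem_segment ℝ x y)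
  gcongr
  exact norm_sub_le_of_mem_segment hz

theorem norm_slope_sub_fderiv_le_of_holder {f : E → F} (hf : Differentiable ℝ f)
    {K γ : ℝ} (hK : 0 ≤ K) (hγ : 0 ≤ γ) {x : E}
    (hhol : ∀ z, ‖fderiv ℝ f z - fderiv ℝ f x‖ ≤ K * ‖z - x‖ ^ γ)
    {e : E} (he : ‖e‖ ≤ 1) {h : ℝ} (hh : h ≠ 0) :
    ‖h⁻¹ • (f (x + h • e) - f x) - fderiv ℝ f x e‖ ≤ K * |h| ^ γ := by
  have hstep : ‖h • e‖ ≤ |h| := by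
    simpa [norm_smul] using mul_le_mul_of_nonneg_left he (abs_nonneg h)
  have hrem := norm_image_sub_sub_fderiv_le_of_holder hf hK hγ hhol (x + h • e)
  rw [add_sub_cancel_left] at hrem
  have hquot : h⁻¹ • (f (x + h • e) - f x) - fderiv ℝ f x e
      = h⁻¹ • (f (x + h • e) - f x - fderiv ℝ f x (h • e)) := by
    rw [map_smul, smul_sub, smul_sub, smul_sub, inv_smul_smul₀ hh]
  calc ‖h⁻¹ • (f (x + h • e) - f x) - fderiv ℝ f x e‖
      ≤ |h|⁻¹ * (K * |h| ^ γ * |h|) := by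
        rw [hquot, norm_smul, norm_inv, Real.norm_eq_abs]
        gcongr
        exact hrem.trans (by gcongr)
    _ = K * |h| ^ γ := by field_simp

end HolderDerivative

theorem hasDerivAt_zero_of_norm_slope_sub_le {F : Type*} [NormedAddCommGroup F]
    [NormedSpace ℝ F] {g : ℝ → F} {L : F} {C γ : ℝ} (hγ : 0 < γ)
    (hbound : ∀ h : ℝ, h ≠ 0 → ‖h⁻¹ • (g h - g 0) - L‖ ≤ C * |h| ^ γ) :
    HasDerivAt g L 0 := by
  rw [hasDerivAt_iff_tendsto_slope, tendsto_iff_norm_sub_tendsto_zero]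
  have hlim : Tendsto (fun h : ℝ => C * |h| ^ γ) (𝓝[≠] 0) (𝓝 0) := by
    have hcont : Continuous fun h : ℝ => C * |h| ^ γ :=
      continuous_const.mul (continuous_abs.rpow_const fun _ => Or.inr hγ.le)
    exact (hcont.tendsto' 0 0 (by simp [Real.zero_rpow hγ.ne'])).mono_left nhdsWithin_le_nhds
  refine squeeze_zero' (Eventually.of_forall fun _ => norm_nonneg _) ?_ hlim
  filter_upwards [self_mem_nhdsWithin] with h hh
  simpa [slope] using hbound h hh

theorem IsCmGammaEmbedding.norm_fderiv_sub_le {X : Type*} [NormedAddCommGroup X]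
    [NormedSpace ℝ X] {n : ℕ} {ι : X →ₗ[ℝ] ((Fin n → ℝ) → ℝ)} {γ C : ℝ}
    (hemb : IsCmGammaEmbedding n ι 1 γ C) (f : X) (z w : Fin n → ℝ) :
    ‖fderiv ℝ (ι f) z - fderiv ℝ (ι f) w‖ ≤ C * ‖f‖ * ‖z - w‖ ^ γ :=
  (norm_fderiv_sub_fderiv_eq_norm_iteratedFDeriv_one_sub _ z w).trans_le ((hemb f).2.2 z w)

theorem delta_directional_deriv_general {X : Type*} [NormedAddCommGroup X] [NormedSpace ℝ X]
    {n : ℕ} {γ C : ℝ} (hγ : 0 < γ) (hC : 0 ≤ C)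
    (ι : X →ₗ[ℝ] ((Fin n → ℝ) → ℝ))
    (hemb : IsCmGammaEmbedding n ι 1 γ C)
    (δ : (Fin n → ℝ) → (X →L[ℝ] ℝ))
    (hδ : ∀ (x : Fin n → ℝ) (f : X), δ x f = ι f x)
    (x e : Fin n → ℝ) (he : ‖e‖ ≤ 1)
    (Λ : X →L[ℝ] ℝ) (hΛ : ∀ f : X, Λ f = fderiv ℝ (ι f) x e) :
    (∀ h : ℝ, h ≠ 0 → ‖h⁻¹ • (δ (x + h • e) - δ x) - Λ‖ ≤ C * |h| ^ γ) ∧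
    HasDerivAt (fun h : ℝ => δ (x + h • e)) Λ 0 := by
  have hquot : ∀ h : ℝ, h ≠ 0 → ‖h⁻¹ • (δ (x + h • e) - δ x) - Λ‖ ≤ C * |h| ^ γ := by
    intro h hh
    refine ContinuousLinearMap.opNorm_le_bound _ (by positivity) fun f => ?_
    have hf := norm_slope_sub_fderiv_le_of_holder ((hemb f).1.differentiable one_ne_zero)
      (by positivity) hγ.le (fun z => hemb.norm_fderiv_sub_le f z x) he hh
    simpa [hδ, hΛ, mul_right_comm C] using hf
  refine ⟨hquot, hasDerivAt_zero_of_norm_slope_sub_le (C := C) hγ fun h hh => ?_⟩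
  simpa using hquot h hh

/-- If `ι` is a `C^{1,γ}`-embedding with constant `C`, `x ∈ ℝⁿ`, `‖e‖ ≤ 1`, and
`Λ ∈ X*` is `Λ(f) = (fderiv ℝ f̂ x) e`, then for every `h ≠ 0` the difference
quotient of `δ` satisfies `‖(δ(x + h•e) − δ(x))/h − Λ‖ ≤ C|h|^γ`; consequently the
directional derivative of `δ` at `x` in the direction `e` exists and equals `Λ`. -/
theorem delta_directional_deriv {X : Type*} [NormedAddCommGroup X] [NormedSpace ℝ X]
    [CompleteSpace X]
    {n : ℕ} (hn : 0 < n) {γ C : ℝ} (hγ : 0 < γ) (hγ1 : γ < 1) (hC : 0 ≤ C)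
    (ι : X →ₗ[ℝ] ((Fin n → ℝ) → ℝ))
    (hemb : IsCmGammaEmbedding n ι 1 γ C)
    (δ : (Fin n → ℝ) → (X →L[ℝ] ℝ))
    (hδ : ∀ (x : Fin n → ℝ) (f : X), δ x f = ι f x)
    (x e : Fin n → ℝ) (he : ‖e‖ ≤ 1)
    (Λ : X →L[ℝ] ℝ) (hΛ : ∀ f : X, Λ f = fderiv ℝ (ι f) x e) :
    (∀ h : ℝ, h ≠ 0 → ‖h⁻¹ • (δ (x + h • e) - δ x) - Λ‖ ≤ C * |h| ^ γ) ∧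
    HasDerivAt (fun h : ℝ => δ (x + h • e)) Λ 0 :=
  delta_directional_deriv_general hγ hC ι hemb δ hδ x e he Λ hΛ
end

section
/- Suppose ι is a C^{1,γ}-embedding with constant C. Then δ : ℝⁿ → X* is Fréchet differentiable at every point x ∈ ℝⁿ, with derivative the continuous linear map Dδ_x : ℝⁿ → X* given by Dδ_x(v)(f) = (fderiv ℝ f̂ x) v; moreover one has the quantitative estimate ‖δ(x + v) − δ(x) − Dδ_x(v)‖_{X*} ≤ C‖v‖^{1+γ} for all v ∈ ℝⁿ. -/
open Asymptotics Filter Topology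

section Calculus

variable {𝕜 E F : Type*} [NontriviallyNormedField 𝕜] [NormedAddCommGroup E] [NormedSpace 𝕜 E]
  [NormedAddCommGroup F] [NormedSpace 𝕜 F]

theorem iteratedFDeriv_one_eq (f : E → F) (x : E) :
    iteratedFDeriv 𝕜 1 f x = (continuousMultilinearCurryFin1 𝕜 E F).symm (fderiv 𝕜 f x) := by
  ext m
  simp

theorem norm_iteratedFDeriv_one_sub (f : E → F) (x y : E) :
    ‖iteratedFDeriv 𝕜 1 f x - iteratedFDeriv 𝕜 1 f y‖ = ‖fderiv 𝕜 f x - fderiv 𝕜 f y‖ := by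
  rw [iteratedFDeriv_one_eq, iteratedFDeriv_one_eq, ← map_sub, LinearIsometryEquiv.norm_map]

theorem isLittleO_norm_rpow_one_add {γ : ℝ} (hγ : 0 < γ) :
    (fun v : E ↦ ‖v‖ ^ (1 + γ)) =o[𝓝 0] fun v ↦ v := by
  have hsmall : (fun v : E ↦ ‖v‖ ^ γ) =o[𝓝 0] fun _ ↦ (1 : ℝ) := by
    rw [isLittleO_one_iff]
    simpa [Real.zero_rpow hγ.ne'] using tendsto_norm_zero.rpow_const (.inr hγ.le)
  refine isLittleO_norm_right.mp ?_
  simpa [Real.rpow_one_add' (norm_nonneg _) (by positivity : 1 + γ ≠ 0), mul_comm] using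
    hsmall.mul_isBigO (isBigO_refl (fun v : E ↦ ‖v‖) (𝓝 0))

theorem hasFDerivAt_of_norm_sub_sub_le_rpow {g : E → F} {g' : E →L[𝕜] F} {x : E} {C γ : ℝ}
    (hγ : 0 < γ) (hg : ∀ v, ‖g (x + v) - g x - g' v‖ ≤ C * ‖v‖ ^ (1 + γ)) :
    HasFDerivAt g g' x := by
  rw [hasFDerivAt_iff_isLittleO_nhds_zero]
  refine IsBigO.trans_isLittleO (.of_bound C ?_) (isLittleO_norm_rpow_one_add hγ)
  filter_upwards with v
  rw [Real.norm_of_nonneg (by positivity)]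
  exact hg v

noncomputable def fderivLinearMap {X : Type*} [AddCommGroup X] [Module 𝕜 X]
    (ι : X →ₗ[𝕜] (E → F)) (x : E) (hι : ∀ f, DifferentiableAt 𝕜 (ι f) x) :
    X →ₗ[𝕜] (E →L[𝕜] F) where
  toFun f := fderiv 𝕜 (ι f) x
  map_add' f g := by rw [map_add, fderiv_add (hι f) (hι g)]
  map_smul' c f := by rw [map_smul, fderiv_const_smul (hι f) c]; rfl

end Calculus

theorem norm_sub_sub_fderiv_le_of_holder {E F : Type*} [NormedAddCommGroup E] [NormedSpace ℝ E]
    [NormedAddCommGroup F] [NormedSpace ℝ F] {f : E → F} (hf : Differentiable ℝ f) {x : E}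
    {K γ : ℝ} (hK : 0 ≤ K) (hγ : 0 ≤ γ)
    (hholder : ∀ y, ‖fderiv ℝ f y - fderiv ℝ f x‖ ≤ K * ‖y - x‖ ^ γ) (v : E) :
    ‖f (x + v) - f x - fderiv ℝ f x v‖ ≤ K * ‖v‖ ^ (1 + γ) := by
  have hbound : ∀ y ∈ Metric.closedBall x ‖v‖, ‖fderiv ℝ f y - fderiv ℝ f x‖ ≤ K * ‖v‖ ^ γ :=
    fun y hy ↦ (hholder y).trans (by gcongr; exact mem_closedBall_iff_norm.mp hy)
  have hmvt := (convex_closedBall x ‖v‖).norm_image_sub_le_of_norm_fderiv_le'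
    (fun y _ ↦ hf y) hbound (Metric.mem_closedBall_self (norm_nonneg v))
    (by simp : x + v ∈ Metric.closedBall x ‖v‖)
  rw [Real.rpow_one_add' (norm_nonneg v) (by positivity)]
  simpa [mul_comm, mul_left_comm] using hmvt

namespace IsCmGammaEmbedding

variable {X : Type*} [NormedAddCommGroup X] [NormedSpace ℝ X] {n : ℕ}
  {ι : X →ₗ[ℝ] ((Fin n → ℝ) → ℝ)} {γ C : ℝ}

theorem differentiable (h : IsCmGammaEmbedding n ι 1 γ C) (f : X) : Differentiable ℝ (ι f) :=
  (h f).1.differentiable one_ne_zero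

theorem norm_fderiv_le (h : IsCmGammaEmbedding n ι 1 γ C) (f : X) (x : Fin n → ℝ) :
    ‖fderiv ℝ (ι f) x‖ ≤ C * ‖f‖ := by
  simpa using (h f).2.1 1 le_rfl x

theorem norm_fderiv_sub_le_s3 (h : IsCmGammaEmbedding n ι 1 γ C) (f : X) (x y : Fin n → ℝ) :
    ‖fderiv ℝ (ι f) x - fderiv ℝ (ι f) y‖ ≤ C * ‖f‖ * ‖x - y‖ ^ γ := by
  simpa [norm_iteratedFDeriv_one_sub] using (h f).2.2 x y

end IsCmGammaEmbedding

theorem delta_hasFDerivAt_general {X : Type*} [NormedAddCommGroup X] [NormedSpace ℝ X]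
    {n : ℕ} {γ C : ℝ} (hγ : 0 < γ) (hC : 0 ≤ C)
    (ι : X →ₗ[ℝ] ((Fin n → ℝ) → ℝ))
    (hemb : IsCmGammaEmbedding n ι 1 γ C)
    (δ : (Fin n → ℝ) → (X →L[ℝ] ℝ))
    (hδ : ∀ (x : Fin n → ℝ) (f : X), δ x f = ι f x) :
    ∀ x : Fin n → ℝ, ∃ D : (Fin n → ℝ) →L[ℝ] (X →L[ℝ] ℝ),
      (∀ (v : Fin n → ℝ) (f : X), D v f = fderiv ℝ (ι f) x v) ∧
      HasFDerivAt δ D x ∧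
      ∀ v : Fin n → ℝ, ‖δ (x + v) - δ x - D v‖ ≤ C * ‖v‖ ^ (1 + γ) := by
  intro x
  let L : X →L[ℝ] ((Fin n → ℝ) →L[ℝ] ℝ) :=
    (fderivLinearMap ι x fun f ↦ (hemb.differentiable f).differentiableAt).mkContinuous C
      fun f ↦ hemb.norm_fderiv_le f x
  have hremainder : ∀ v, ‖δ (x + v) - δ x - L.flip v‖ ≤ C * ‖v‖ ^ (1 + γ) := fun v ↦
    ContinuousLinearMap.opNorm_le_bound _ (by positivity) fun f ↦ by
      simp only [sub_apply, hδ]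
      exact (norm_sub_sub_fderiv_le_of_holder (hemb.differentiable f) (by positivity) hγ.le
        (fun y ↦ hemb.norm_fderiv_sub_le_s3 f y x) v).trans_eq (by ring)
  exact ⟨L.flip, fun _ _ ↦ rfl, hasFDerivAt_of_norm_sub_sub_le_rpow hγ hremainder, hremainder⟩

/-- If `ι` is a `C^{1,γ}`-embedding with constant `C`, then `δ` is Fréchet
differentiable at every `x`, with derivative `Dδ_x(v)(f) = (fderiv ℝ f̂ x) v`, and
`‖δ(x + v) − δ(x) − Dδ_x(v)‖ ≤ C‖v‖^{1+γ}` for all `v`. -/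
theorem delta_hasFDerivAt {X : Type*} [NormedAddCommGroup X] [NormedSpace ℝ X]
    [CompleteSpace X]
    {n : ℕ} (hn : 0 < n) {γ C : ℝ} (hγ : 0 < γ) (hγ1 : γ < 1) (hC : 0 ≤ C)
    (ι : X →ₗ[ℝ] ((Fin n → ℝ) → ℝ))
    (hemb : IsCmGammaEmbedding n ι 1 γ C)
    (δ : (Fin n → ℝ) → (X →L[ℝ] ℝ))
    (hδ : ∀ (x : Fin n → ℝ) (f : X), δ x f = ι f x) :
    ∀ x : Fin n → ℝ, ∃ D : (Fin n → ℝ) →L[ℝ] (X →L[ℝ] ℝ),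
      (∀ (v : Fin n → ℝ) (f : X), D v f = fderiv ℝ (ι f) x v) ∧
      HasFDerivAt δ D x ∧
      ∀ v : Fin n → ℝ, ‖δ (x + v) - δ x - D v‖ ≤ C * ‖v‖ ^ (1 + γ) :=
  delta_hasFDerivAt_general hγ hC ι hemb δ hδ
end

section
/- Let m be a natural number and l < m, and suppose ι is a C^{m,γ}-embedding with constant C. Then the map Δ_l : ℝⁿ → L(X, E_l) is Fréchet differentiable at every x ∈ ℝⁿ, and its derivative in the direction v ∈ ℝⁿ is the continuous linear map X → E_l sending f to the l-multilinear map (w₁, …, w_l) ↦ (iteratedFDeriv ℝ (l+1) f̂ x)(v, w₁, …, w_l), i.e. the (l+1)-st iterated derivative of f̂ at x with v inserted in the first slot. -/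
open Filter Topology

section MeanValue

variable {𝕜 : Type*} [RCLike 𝕜] {E : Type*} [NormedAddCommGroup E] [NormedSpace 𝕜 E]
  {F : Type*} [NormedAddCommGroup F] [NormedSpace 𝕜 F]
  {X : Type*} [NormedAddCommGroup X] [NormedSpace 𝕜 X]

theorem hasFDerivAt_of_norm_hasFDerivAt_apply_sub_le {Δ : E → X →L[𝕜] F}
    {φ : E → X → E →L[𝕜] F} {Φ : X →L[𝕜] E →L[𝕜] F} {ω : E → ℝ} {x : E}
    (hω : Tendsto ω (𝓝 x) (𝓝 0))
    (hder : ∀ᶠ z in 𝓝 x, ∀ f, HasFDerivAt (fun y => Δ y f) (φ z f) z)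
    (hbound : ∀ᶠ z in 𝓝 x, ∀ f, ‖φ z f - Φ f‖ ≤ ω z * ‖f‖) :
    HasFDerivAt Δ Φ.flip x := by
  rw [hasFDerivAt_iff_isLittleO, Asymptotics.isLittleO_iff]
  intro c hc
  obtain ⟨ε, hε, hball⟩ := Metric.eventually_nhds_iff_ball.1
    (hder.and (hbound.and (hω.eventually (eventually_le_nhds hc))))
  filter_upwards [Metric.ball_mem_nhds x hε] with y hy
  refine ContinuousLinearMap.opNorm_le_bound _ (by positivity) fun f => ?_
  let : NormedSpace ℝ E := .restrictScalars ℝ 𝕜 E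
  have hmv : ‖Δ y f - Δ x f - Φ f (y - x)‖ ≤ c * ‖f‖ * ‖y - x‖ := by
    refine (convex_ball x ε).norm_image_sub_le_of_norm_hasFDerivWithin_le'
      (fun z hz => ((hball z hz).1 f).hasFDerivWithinAt) (fun z hz => ?_)
      (Metric.mem_ball_self hε) hy
    obtain ⟨-, hφ, hωc⟩ := hball z hz
    exact (hφ f).trans (by gcongr)
  calc ‖(Δ y - Δ x - Φ.flip (y - x)) f‖ = ‖Δ y f - Δ x f - Φ f (y - x)‖ := rfl
    _ ≤ c * ‖y - x‖ * ‖f‖ := by linarith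

theorem ContDiff.norm_iteratedFDeriv_sub_le {g : E → F} {k : ℕ} {K : ℝ}
    (hg : ContDiff 𝕜 (k + 1) g) (hK : ∀ z, ‖iteratedFDeriv 𝕜 (k + 1) g z‖ ≤ K) (x y : E) :
    ‖iteratedFDeriv 𝕜 k g y - iteratedFDeriv 𝕜 k g x‖ ≤ K * ‖y - x‖ := by
  let : NormedSpace ℝ E := .restrictScalars ℝ 𝕜 E
  refine convex_univ.norm_image_sub_le_of_norm_fderiv_le
    (fun z _ => (hg.differentiable_iteratedFDeriv (mod_cast lt_add_one k)) z)
    (fun z _ => ?_) (Set.mem_univ x) (Set.mem_univ y)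
  rw [norm_fderiv_iteratedFDeriv]
  exact hK z

end MeanValue

section IteratedFDeriv

variable {𝕜 : Type*} [NontriviallyNormedField 𝕜] {E : Type*} [NormedAddCommGroup E]
  [NormedSpace 𝕜 E] {F : Type*} [NormedAddCommGroup F] [NormedSpace 𝕜 F]
  {X : Type*} [NormedAddCommGroup X] [NormedSpace 𝕜 X]

noncomputable def LinearMap.iteratedFDerivCLM (ι : X →ₗ[𝕜] E → F) (k : ℕ) (z : E) {C : ℝ}
    (hι : ∀ f, ContDiffAt 𝕜 k (ι f) z) (hC : ∀ f, ‖iteratedFDeriv 𝕜 k (ι f) z‖ ≤ C * ‖f‖) :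
    X →L[𝕜] ContinuousMultilinearMap 𝕜 (fun _ : Fin k => E) F :=
  LinearMap.mkContinuous
    { toFun f := iteratedFDeriv 𝕜 k (ι f) z
      map_add' f g := by rw [map_add]; exact iteratedFDeriv_add_apply (hι f) (hι g)
      map_smul' c f := by rw [map_smul]; exact iteratedFDeriv_const_smul_apply (hι f) }
    C hC

theorem ContDiff.hasFDerivAt_iteratedFDeriv {g : E → F} {k : ℕ} (hg : ContDiff 𝕜 (k + 1) g)
    (z : E) :
    HasFDerivAt (iteratedFDeriv 𝕜 k g)
      (continuousMultilinearCurryLeftEquiv 𝕜 (fun _ : Fin (k + 1) => E) F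
        (iteratedFDeriv 𝕜 (k + 1) g z)) z := by
  have := ((hg.differentiable_iteratedFDeriv (mod_cast lt_add_one k)) z).hasFDerivAt
  rwa [fderiv_iteratedFDeriv] at this

end IteratedFDeriv

namespace IsCmGammaEmbedding

variable {X : Type*} [NormedAddCommGroup X] [NormedSpace ℝ X] {n : ℕ}
  {ι : X →ₗ[ℝ] ((Fin n → ℝ) → ℝ)} {m : ℕ} {γ C : ℝ}

/-- Below order `m` the derivatives are even Lipschitz, which implies the `γ`-Hölder bound
at distance at most `1`. -/
theorem norm_iteratedFDeriv_sub_le (h : IsCmGammaEmbedding n ι m γ C) (hC : 0 ≤ C)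
    (hγ : γ ≤ 1) {k : ℕ} (hk : k ≤ m) (f : X) {x z : Fin n → ℝ} (hzx : ‖z - x‖ ≤ 1) :
    ‖iteratedFDeriv ℝ k (ι f) z - iteratedFDeriv ℝ k (ι f) x‖ ≤ C * ‖f‖ * ‖z - x‖ ^ γ := by
  obtain rfl | hlt := hk.eq_or_lt
  · exact (h f).2.2 z x
  calc ‖iteratedFDeriv ℝ k (ι f) z - iteratedFDeriv ℝ k (ι f) x‖ ≤ C * ‖f‖ * ‖z - x‖ :=
        ((h f).1.of_le (mod_cast hlt)).norm_iteratedFDeriv_sub_le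
          (fun y => (h f).2.1 (k + 1) hlt y) x z
    _ ≤ C * ‖f‖ * ‖z - x‖ ^ γ := by
        gcongr
        exact Real.self_le_rpow_of_le_one (norm_nonneg _) hzx hγ

end IsCmGammaEmbedding

theorem deltaL_hasFDerivAt_general {X : Type*} [NormedAddCommGroup X] [NormedSpace ℝ X]
    {n : ℕ} {γ C : ℝ} (hγ : 0 < γ) (hγ1 : γ < 1) (hC : 0 ≤ C)
    (ι : X →ₗ[ℝ] ((Fin n → ℝ) → ℝ)) (m l : ℕ) (hlm : l < m)
    (hemb : IsCmGammaEmbedding n ι m γ C)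
    (Δ : (Fin n → ℝ) → (X →L[ℝ] ContinuousMultilinearMap ℝ (fun _ : Fin l => Fin n → ℝ) ℝ))
    (hΔ : ∀ (x : Fin n → ℝ) (f : X), Δ x f = iteratedFDeriv ℝ l (ι f) x) :
    ∀ x : Fin n → ℝ,
      ∃ D : (Fin n → ℝ) →L[ℝ]
          (X →L[ℝ] ContinuousMultilinearMap ℝ (fun _ : Fin l => Fin n → ℝ) ℝ),
        (∀ (v : Fin n → ℝ) (f : X) (w : Fin l → Fin n → ℝ),
          D v f w = iteratedFDeriv ℝ (l + 1) (ι f) x (Fin.cons v w)) ∧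
        HasFDerivAt Δ D x := by
  intro x
  have hk : l + 1 ≤ m := hlm
  have hsmooth (f : X) : ContDiff ℝ (l + 1) (ι f) := (hemb f).1.of_le (mod_cast hk)
  set curry := continuousMultilinearCurryLeftEquiv ℝ (fun _ : Fin (l + 1) => Fin n → ℝ) ℝ
  let Φ := curry.toContinuousLinearEquiv.toContinuousLinearMap.comp
    (ι.iteratedFDerivCLM (l + 1) x (fun f => (hsmooth f).contDiffAt) fun f => (hemb f).2.1 _ hk x)
  have hω : Tendsto (fun z => C * ‖z - x‖ ^ γ) (𝓝 x) (𝓝 0) := by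
    simpa [Real.zero_rpow hγ.ne'] using
      ((tendsto_norm_sub_self x).rpow_const (Or.inr hγ.le)).const_mul C
  refine ⟨Φ.flip, fun v f w => rfl, hasFDerivAt_of_norm_hasFDerivAt_apply_sub_le
    (φ := fun z f => curry (iteratedFDeriv ℝ (l + 1) (ι f) z)) hω (.of_forall fun z f => ?_) ?_⟩
  · simpa only [hΔ] using (hsmooth f).hasFDerivAt_iteratedFDeriv z
  · filter_upwards [Metric.closedBall_mem_nhds x one_pos] with z hz f
    rw [mem_closedBall_iff_norm] at hz
    calc ‖curry (iteratedFDeriv ℝ (l + 1) (ι f) z) - Φ f‖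
        = ‖iteratedFDeriv ℝ (l + 1) (ι f) z - iteratedFDeriv ℝ (l + 1) (ι f) x‖ := by
          rw [← curry.norm_map, curry.map_sub]; rfl
      _ ≤ C * ‖f‖ * ‖z - x‖ ^ γ := hemb.norm_iteratedFDeriv_sub_le hC hγ1.le hk f hz
      _ = C * ‖z - x‖ ^ γ * ‖f‖ := by ring

/-- If `l < m` and `ι` is a `C^{m,γ}`-embedding with constant `C`, then
`Δ_l : ℝⁿ → L(X, E_l)` is Fréchet differentiable at every `x`, with derivative in
direction `v` sending `f` to `(w₁, …, w_l) ↦ (iteratedFDeriv ℝ (l+1) f̂ x)(v, w₁, …, w_l)`. -/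
theorem deltaL_hasFDerivAt {X : Type*} [NormedAddCommGroup X] [NormedSpace ℝ X]
    [CompleteSpace X]
    {n : ℕ} (hn : 0 < n) {γ C : ℝ} (hγ : 0 < γ) (hγ1 : γ < 1) (hC : 0 ≤ C)
    (ι : X →ₗ[ℝ] ((Fin n → ℝ) → ℝ)) (m l : ℕ) (hlm : l < m)
    (hemb : IsCmGammaEmbedding n ι m γ C)
    (Δ : (Fin n → ℝ) → (X →L[ℝ] ContinuousMultilinearMap ℝ (fun _ : Fin l => Fin n → ℝ) ℝ))
    (hΔ : ∀ (x : Fin n → ℝ) (f : X), Δ x f = iteratedFDeriv ℝ l (ι f) x) :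
    ∀ x : Fin n → ℝ,
      ∃ D : (Fin n → ℝ) →L[ℝ]
          (X →L[ℝ] ContinuousMultilinearMap ℝ (fun _ : Fin l => Fin n → ℝ) ℝ),
        (∀ (v : Fin n → ℝ) (f : X) (w : Fin l → Fin n → ℝ),
          D v f w = iteratedFDeriv ℝ (l + 1) (ι f) x (Fin.cons v w)) ∧
        HasFDerivAt Δ D x :=
  deltaL_hasFDerivAt_general hγ hγ1 hC ι m l hlm hemb Δ hΔ
end

section
/- Let m be a natural number and suppose ι is a C^{m,γ}-embedding with constant C. Then the delta map δ : ℝⁿ → X* is of class C^m (i.e. ContDiff ℝ m δ, where X* carries the operator norm). -/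
open Filter Topology

universe u

section

variable {𝕜 E G : Type*} [NontriviallyNormedField 𝕜] [NormedAddCommGroup E] [NormedSpace 𝕜 E]
  [NormedAddCommGroup G] [NormedSpace 𝕜 G]

theorem norm_iteratedFDeriv_zero_sub (u : E → G) (x y : E) :
    ‖iteratedFDeriv 𝕜 0 u x - iteratedFDeriv 𝕜 0 u y‖ = ‖u x - u y‖ := by
  simp only [iteratedFDeriv_zero_eq_comp, Function.comp_apply, ← map_sub,
    LinearIsometryEquiv.norm_map]

theorem norm_iteratedFDeriv_fderiv_sub (u : E → G) (k : ℕ) (x y : E) :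
    ‖iteratedFDeriv 𝕜 k (fderiv 𝕜 u) x - iteratedFDeriv 𝕜 k (fderiv 𝕜 u) y‖ =
      ‖iteratedFDeriv 𝕜 (k + 1) u x - iteratedFDeriv 𝕜 (k + 1) u y‖ := by
  rw [iteratedFDeriv_succ_eq_comp_right, iteratedFDeriv_succ_eq_comp_right, Function.comp_apply,
    Function.comp_apply, ← LinearIsometryEquiv.map_sub, LinearIsometryEquiv.norm_map]

end

namespace ContinuousLinearMap

variable {E X G : Type*} [NormedAddCommGroup E] [NormedAddCommGroup X] [NormedSpace ℝ X]
  [NormedAddCommGroup G] [NormedSpace ℝ G]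

theorem continuous_of_norm_apply_sub_le {F : E → X →L[ℝ] G} {C γ : ℝ} (hC : 0 ≤ C) (hγ : 0 < γ)
    (hF : ∀ f x y, ‖F x f - F y f‖ ≤ C * ‖f‖ * ‖x - y‖ ^ γ) : Continuous F := by
  refine continuous_iff_continuousAt.2 fun x => tendsto_iff_norm_sub_tendsto_zero.2 ?_
  have hle : ∀ y, ‖F y - F x‖ ≤ C * ‖y - x‖ ^ γ := fun y =>
    opNorm_le_bound _ (by positivity) fun f => by
      simpa only [sub_apply, mul_right_comm] using hF f y x
  have hlim : Tendsto (fun y => C * ‖y - x‖ ^ γ) (𝓝 x) (𝓝 0) := by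
    have : Continuous fun y => C * ‖y - x‖ ^ γ := by fun_prop (disch := exact hγ.le)
    simpa [Real.zero_rpow hγ.ne'] using this.tendsto x
  exact squeeze_zero (fun _ => norm_nonneg _) hle hlim

theorem hasFDerivAt_of_hasFDerivAt_apply [NormedSpace ℝ E] {F : E → X →L[ℝ] G}
    {F' : E → X →L[ℝ] E →L[ℝ] G} {x : E} (hF : ∀ f y, HasFDerivAt (fun y => F y f) (F' y f) y)
    (hF' : ContinuousAt F' x) :
    HasFDerivAt F (F' x).flip x := by
  refine hasFDerivAt_iff_isLittleO_nhds_zero.2 <| Asymptotics.isLittleO_iff.2 fun ε hε => ?_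
  obtain ⟨r, hr, hball⟩ := (Metric.continuousAt_iff (f := F')).1 hF' ε hε
  filter_upwards [Metric.ball_mem_nhds 0 hr] with h hh
  refine opNorm_le_bound _ (by positivity) fun f => ?_
  have hmean := (convex_ball x r).norm_image_sub_le_of_norm_hasFDerivWithin_le'
    (f := fun y => F y f) (φ := F' x f) (C := ε * ‖f‖)
    (fun y _ => (hF f y).hasFDerivWithinAt)
    (fun y hy => by
      rw [← sub_apply]
      refine (le_opNorm _ _).trans (mul_le_mul_of_nonneg_right ?_ (norm_nonneg _))
      exact (dist_eq_norm (F' y) (F' x) ▸ hball hy).le)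
    (Metric.mem_ball_self hr) (y := x + h) (by simpa [dist_eq_norm] using hh)
  simpa only [sub_apply, flip_apply, add_sub_cancel_left, mul_right_comm] using hmean

theorem exists_eq_fderiv_apply [NormedSpace ℝ E] {F : E → X →L[ℝ] G} {C : ℝ}
    (hF : ∀ f, Differentiable ℝ fun x => F x f)
    (hbound : ∀ f x, ‖fderiv ℝ (fun x => F x f) x‖ ≤ C * ‖f‖) :
    ∃ F' : E → X →L[ℝ] E →L[ℝ] G, ∀ x f, F' x f = fderiv ℝ (fun x => F x f) x :=
  ⟨fun x => LinearMap.mkContinuous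
    { toFun := fun f => fderiv ℝ (fun x => F x f) x
      map_add' := fun f g => by
        simp only [map_add]
        exact fderiv_fun_add (hF f x) (hF g x)
      map_smul' := fun c f => by
        simp only [map_smul]
        exact fderiv_fun_const_smul (hF f x) c }
    C (fun f => hbound f x), fun _ _ => rfl⟩

-- `E` and `G` share a universe so that the induction can replace `G` by `E →L[ℝ] G`.
theorem contDiff_of_holder_iteratedFDeriv_apply {E G : Type u} [NormedAddCommGroup E]
    [NormedSpace ℝ E] [NormedAddCommGroup G] [NormedSpace ℝ G]
    {C γ : ℝ} (hC : 0 ≤ C) (hγ : 0 < γ) (m : ℕ) {F : E → X →L[ℝ] G}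
    (hdiff : ∀ f, ContDiff ℝ m fun x => F x f)
    (hbound : ∀ f, ∀ i, 0 < i → i ≤ m → ∀ x,
      ‖iteratedFDeriv ℝ i (fun x => F x f) x‖ ≤ C * ‖f‖)
    (hholder : ∀ f x y, ‖iteratedFDeriv ℝ m (fun x => F x f) x -
      iteratedFDeriv ℝ m (fun x => F x f) y‖ ≤ C * ‖f‖ * ‖x - y‖ ^ γ) :
    ContDiff ℝ m F := by
  induction m generalizing G F with
  | zero =>
    refine contDiff_zero.2 (continuous_of_norm_apply_sub_le hC hγ fun f x y => ?_)
    simpa only [norm_iteratedFDeriv_zero_sub] using hholder f x y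
  | succ m ih =>
    have hdiff₁ : ∀ f, Differentiable ℝ fun x => F x f := fun f =>
      (hdiff f).differentiable (by simp)
    obtain ⟨F', hF'⟩ := exists_eq_fderiv_apply hdiff₁ fun f x => by
      simpa only [norm_iteratedFDeriv_one] using hbound f 1 one_pos (by omega) x
    have hF'_apply : ∀ f, (fun x => F' x f) = fderiv ℝ fun x => F x f := fun f =>
      funext fun x => hF' x f
    have hF'_contDiff : ContDiff ℝ m F' := by
      refine ih (fun f => ?_) (fun f i hi him x => ?_) (fun f x y => ?_)
      · rw [hF'_apply]
        exact (hdiff f).fderiv_right (by push_cast; rfl)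
      · rw [hF'_apply, norm_iteratedFDeriv_fderiv]
        exact hbound f (i + 1) (by omega) (by omega) x
      · rw [hF'_apply, norm_iteratedFDeriv_fderiv_sub]
        exact hholder f x y
    have hF : ∀ x, HasFDerivAt F (F' x).flip x := fun x =>
      hasFDerivAt_of_hasFDerivAt_apply (fun f y => hF' y f ▸ (hdiff₁ f y).hasFDerivAt)
        hF'_contDiff.continuous.continuousAt
    rw [Nat.cast_succ, contDiff_succ_iff_fderiv]
    refine ⟨fun x => (hF x).differentiableAt, by simp, ?_⟩
    rw [funext fun x => (hF x).fderiv]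
    exact (LinearIsometryEquiv.contDiff (E := X →L[ℝ] E →L[ℝ] G) (F := E →L[ℝ] X →L[ℝ] G)
      (flipₗᵢ ℝ X E G)).comp hF'_contDiff

end ContinuousLinearMap

theorem delta_contDiff_general {X : Type*} [NormedAddCommGroup X] [NormedSpace ℝ X]
    {n : ℕ} {γ C : ℝ} (hγ : 0 < γ) (hC : 0 ≤ C)
    (ι : X →ₗ[ℝ] ((Fin n → ℝ) → ℝ)) (m : ℕ)
    (hemb : IsCmGammaEmbedding n ι m γ C)
    (δ : (Fin n → ℝ) → (X →L[ℝ] ℝ))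
    (hδ : ∀ (x : Fin n → ℝ) (f : X), δ x f = ι f x) :
    ContDiff ℝ m δ := by
  have hδι : ∀ f, (fun x => δ x f) = ι f := fun f => funext fun x => hδ x f
  refine ContinuousLinearMap.contDiff_of_holder_iteratedFDeriv_apply hC hγ m
    (fun f => ?_) (fun f i _ him x => ?_) (fun f x y => ?_) <;> rw [hδι]
  exacts [(hemb f).1, (hemb f).2.1 i him x, (hemb f).2.2 x y]

/-- If `ι` is a `C^{m,γ}`-embedding with constant `C`, then the delta map
`δ : ℝⁿ → X*` is of class `C^m`. -/
theorem delta_contDiff {X : Type*} [NormedAddCommGroup X] [NormedSpace ℝ X] [CompleteSpace X]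
    {n : ℕ} (hn : 0 < n) {γ C : ℝ} (hγ : 0 < γ) (hγ1 : γ < 1) (hC : 0 ≤ C)
    (ι : X →ₗ[ℝ] ((Fin n → ℝ) → ℝ)) (m : ℕ)
    (hemb : IsCmGammaEmbedding n ι m γ C)
    (δ : (Fin n → ℝ) → (X →L[ℝ] ℝ))
    (hδ : ∀ (x : Fin n → ℝ) (f : X), δ x f = ι f x) :
    ContDiff ℝ m δ :=
  delta_contDiff_general hγ hC ι m hemb δ hδ
end

section
/- Suppose ι is a C^{1,γ}-embedding with constant C. Then the evaluation map E : ℝⁿ × X → ℝ is Fréchet differentiable at every point (x, f), and its derivative is the continuous linear functional DE_{(x,f)} : ℝⁿ × X → ℝ given by DE_{(x,f)}(v, ξ) = (fderiv ℝ f̂ x) v + ξ̂(x). -/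
/-- If `ι` is a `C^{1,γ}`-embedding with constant `C`, then the evaluation map
`E : ℝⁿ × X → ℝ` is Fréchet differentiable at every point `(x, f)`, with derivative
the continuous linear functional `(v, ξ) ↦ (fderiv ℝ f̂ x) v + ξ̂(x)`. -/
theorem eval_hasFDerivAt {X : Type*} [NormedAddCommGroup X] [NormedSpace ℝ X]
    [CompleteSpace X]
    {n : ℕ} (hn : 0 < n) {γ C : ℝ} (hγ : 0 < γ) (hγ1 : γ < 1) (hC : 0 ≤ C)
    (ι : X →ₗ[ℝ] ((Fin n → ℝ) → ℝ))
    (hemb : IsCmGammaEmbedding n ι 1 γ C) :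
    ∀ (x : Fin n → ℝ) (f : X), ∃ D : ((Fin n → ℝ) × X) →L[ℝ] ℝ,
      (∀ (v : Fin n → ℝ) (ξ : X), D (v, ξ) = fderiv ℝ (ι f) x v + ι ξ x) ∧
      HasFDerivAt (fun p : (Fin n → ℝ) × X => ι p.2 p.1) D (x, f) := by
  intro x f
  have hdiff : ∀ ξ : X, Differentiable ℝ (ι ξ) := fun ξ =>
    (hemb ξ).1.differentiable (by norm_num)
  have hfd : ∀ (ξ : X) (z : Fin n → ℝ), ‖fderiv ℝ (ι ξ) z‖ ≤ C * ‖ξ‖ := by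
    intro ξ z
    have h := (hemb ξ).2.1 1 le_rfl z
    have : ‖iteratedFDeriv ℝ 0 (fderiv ℝ (ι ξ)) z‖ = ‖iteratedFDeriv ℝ 1 (ι ξ) z‖ :=
      norm_iteratedFDeriv_fderiv
    rw [norm_iteratedFDeriv_zero] at this
    linarith [this ▸ h]
  have hval : ∀ ξ : X, ‖ι ξ x‖ ≤ C * ‖ξ‖ := by
    intro ξ
    have h := (hemb ξ).2.1 0 (by norm_num) x
    rwa [norm_iteratedFDeriv_zero] at h
  have hlip : ∀ (ξ : X) (y z : Fin n → ℝ), ‖ι ξ y - ι ξ z‖ ≤ C * ‖ξ‖ * ‖y - z‖ := by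
    intro ξ y z
    exact (convex_univ).norm_image_sub_le_of_norm_fderiv_le
      (fun w _ => (hdiff ξ) w) (fun w _ => hfd ξ w) (Set.mem_univ z) (Set.mem_univ y)
  let L : X →L[ℝ] ℝ := LinearMap.mkContinuous
    { toFun := fun ξ => ι ξ x
      map_add' := fun a b => by simp
      map_smul' := fun c a => by simp }
    C hval
  refine ⟨(fderiv ℝ (ι f) x).comp (ContinuousLinearMap.fst ℝ (Fin n → ℝ) X)
    + L.comp (ContinuousLinearMap.snd ℝ (Fin n → ℝ) X), fun v ξ => rfl, ?_⟩
  have h1 : HasFDerivAt (fun p : (Fin n → ℝ) × X => ι f p.1)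
      ((fderiv ℝ (ι f) x).comp (ContinuousLinearMap.fst ℝ (Fin n → ℝ) X)) (x, f) :=
    ((hdiff f x).hasFDerivAt).comp (x, f) (hasFDerivAt_fst)
  have h2 : HasFDerivAt (fun p : (Fin n → ℝ) × X => ι (p.2 - f) p.1)
      (L.comp (ContinuousLinearMap.snd ℝ (Fin n → ℝ) X)) (x, f) := by
    rw [hasFDerivAt_iff_isLittleO_nhds_zero]
    rw [Asymptotics.isLittleO_iff]
    intro ε hε
    have hev : ∀ᶠ h : (Fin n → ℝ) × X in nhds 0, ‖h‖ < ε / (C + 1) := by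
      have : Filter.Tendsto (fun h : (Fin n → ℝ) × X => ‖h‖) (nhds 0) (nhds 0) := by
        simpa using continuous_norm.tendsto (0 : (Fin n → ℝ) × X)
      exact this.eventually_lt_const (by positivity)
    filter_upwards [hev] with h hh
    have heq : ι ((f + h.2) - f) (x + h.1) - ι (f - f) x
        - (L.comp (ContinuousLinearMap.snd ℝ (Fin n → ℝ) X)) h
        = ι h.2 (x + h.1) - ι h.2 x := by
      simp [L, LinearMap.mkContinuous]
    calc ‖ι ((f + h.2) - f) (x + h.1) - ι (f - f) x
        - (L.comp (ContinuousLinearMap.snd ℝ (Fin n → ℝ) X)) h‖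
        = ‖ι h.2 (x + h.1) - ι h.2 x‖ := by rw [heq]
      _ ≤ C * ‖h.2‖ * ‖x + h.1 - x‖ := hlip h.2 (x + h.1) x
      _ = C * ‖h.2‖ * ‖h.1‖ := by congr 1; simp
      _ ≤ C * ‖h‖ * ‖h‖ := by
          gcongr <;> [exact norm_snd_le h; exact norm_fst_le h]
      _ ≤ (C + 1) * ‖h‖ * ‖h‖ := by
          nlinarith [norm_nonneg h]
      _ ≤ ε * ‖h‖ := by
          have h3 : ‖h‖ * (C + 1) ≤ ε := (le_div_iff₀ (by positivity)).1 hh.le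
          have h4 : (C + 1) * ‖h‖ ≤ ε := by linarith [mul_comm ‖h‖ (C + 1)]
          exact mul_le_mul_of_nonneg_right h4 (norm_nonneg h)
  have hsum := h1.add h2
  have heq : (fun p : (Fin n → ℝ) × X => ι f p.1 + ι (p.2 - f) p.1)
      = fun p : (Fin n → ℝ) × X => ι p.2 p.1 := by
    funext p
    simp [map_sub]
  exact heq ▸ hsum
end
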